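/- arXiv:1707.04452 — 6 statements merged into one kernel-verified Lean document; each statement's English description precedes it below -/
import Mathlib

section
/- The Petersen graph does not admit a 2-bisection. -/
open SimpleGraph Finset

/-- The subgraph of `G` consisting of edges whose endpoints receive the same
colour under the 2-colouring `c`. Its connected components are the
monochromatic components of the colouring. -/
def monoSubgraph {V : Type*} (G : SimpleGraph V) (c : V → Bool) : SimpleGraph V where
  Adj u v := G.Adj u v ∧ c u = c v
  symm := ⟨fun u v h => ⟨h.1.symm, h.2.symm⟩⟩
  loopless := ⟨fun v h => G.loopless.irrefl v h.1⟩

/-- `c` is a `k`-bisection of `G`: the two colour classes have the same size and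
every monochromatic component has at most `k` vertices. -/
def IsKBisection {V : Type*} (G : SimpleGraph V) (c : V → Bool) (k : ℕ) : Prop :=
  {v | c v = true}.ncard = {v | c v = false}.ncard ∧
    ∀ v : V, {w | (monoSubgraph G c).Reachable v w}.ncard ≤ k

/-- `G` is cubic: every vertex has degree 3. -/
def IsCubic {V : Type*} (G : SimpleGraph V) : Prop :=
  ∀ v : V, (G.neighborSet v).ncard = 3

/-- `G` is bridgeless: no edge is a cut-edge. -/
def Bridgeless {V : Type*} (G : SimpleGraph V) : Prop :=
  ∀ e ∈ G.edgeSet, ¬ G.IsBridge e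

/-- `G` is claw-free: no induced subgraph isomorphic to `K_{1,3}`. -/
def ClawFree {V : Type*} (G : SimpleGraph V) : Prop :=
  ¬ ∃ v a b c : V, a ≠ b ∧ a ≠ c ∧ b ≠ c ∧
    G.Adj v a ∧ G.Adj v b ∧ G.Adj v c ∧ ¬ G.Adj a b ∧ ¬ G.Adj a c ∧ ¬ G.Adj b c

/-- The diamond graph `K₄ - e` on `Fin 4`, with non-adjacent (degree-2)
vertices `0` and `1` and adjacent (degree-3) vertices `2` and `3`. -/
def diamondGraph : SimpleGraph (Fin 4) :=
  SimpleGraph.fromEdgeSet {s(0, 2), s(0, 3), s(1, 2), s(1, 3), s(2, 3)}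

/-- `f` realises the diamond graph as an induced subgraph of `G`. -/
def IsInducedDiamond {V : Type*} (G : SimpleGraph V) (f : Fin 4 → V) : Prop :=
  Function.Injective f ∧ ∀ i j, G.Adj (f i) (f j) ↔ diamondGraph.Adj i j

/-- The Petersen graph, as the Kneser graph `K(5,2)`: vertices are the
2-element subsets of a 5-element set, adjacent iff disjoint. -/
def petersenGraph : SimpleGraph {s : Finset (Fin 5) // s.card = 2} where
  Adj x y := x ≠ y ∧ Disjoint x.1 y.1
  symm := ⟨fun x y h => ⟨h.1.symm, h.2.symm⟩⟩
  loopless := ⟨fun x h => h.1 rfl⟩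

/-
A colour class of `K(5,2)` is a set of five edges of `K₅`, and the two classes are complementary.
Let `d x` be the degree of `x` in the `true` class. An edge `xy` of that class is disjoint from
exactly `6 - d x - d y` of its edges, i.e. has that many same-coloured Petersen neighbours, and a
2-bisection allows at most one; so `d x + d y ≥ 5`. The same count in the `false` class, whose
degrees are `4 - d`, gives `d x + d y ≤ 3` on its edges. Thus no two points have degree sum `4`,
which is impossible for five degrees in `[0, 4]` summing to `10`.
-/

section Bisection

variable {V : Type*} {G : SimpleGraph V} {c : V → Bool} {k : ℕ}

theorem IsKBisection.ncard_neighborSet_add_one_le [Finite V] (h : IsKBisection G c k) (v : V) :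
    ((monoSubgraph G c).neighborSet v).ncard + 1 ≤ k :=
  calc ((monoSubgraph G c).neighborSet v).ncard + 1
      = (insert v ((monoSubgraph G c).neighborSet v)).ncard :=
        (Set.ncard_insert_of_notMem (by simp) (Set.toFinite _)).symm
    _ ≤ {w | (monoSubgraph G c).Reachable v w}.ncard :=
        Set.ncard_le_ncard (by rintro w (rfl | hw); exacts [.rfl, Adj.reachable hw])
    _ ≤ k := h.2 v

theorem IsKBisection.two_mul_card_filter [Fintype V] (h : IsKBisection G c k) (b : Bool) :
    2 * #{v | c v = b} = Fintype.card V := by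
  have hncard (b : Bool) : {v | c v = b}.ncard = #{v | c v = b} := by
    rw [← Set.ncard_coe_finset, coe_filter_univ]
  have hsplit := card_filter_add_card_filter_not (s := univ) (fun v => c v = true)
  simp only [Bool.not_eq_true, card_univ] at hsplit
  have hbal := h.1
  rw [hncard, hncard] at hbal
  cases b <;> omega

end Bisection

section TwoSubsets

variable {α : Type*} [DecidableEq α]

def pairDegree (S : Finset {s : Finset α // s.card = 2}) (x : α) : ℕ := #{v ∈ S | x ∈ v.1}

theorem sum_pairDegree [Fintype α] (S : Finset {s : Finset α // s.card = 2}) :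
    ∑ x, pairDegree S x = 2 * #S := by
  simp only [pairDegree, card_filter]
  rw [sum_comm]
  simp only [sum_boole, filter_mem_eq_inter, univ_inter, Nat.cast_id]
  rw [sum_congr rfl fun v _ => v.2, sum_const, smul_eq_mul, mul_comm]

theorem pairDegree_add_pairDegree (S : Finset {s : Finset α // s.card = 2})
    {v : {s : Finset α // s.card = 2}} (hv : v ∈ S) {x y : α} (hxy : v.1 = {x, y}) :
    pairDegree S x + pairDegree S y = #{w ∈ S | ¬Disjoint w.1 v.1} + 1 := by
  have hunion : {w ∈ S | ¬Disjoint w.1 v.1} = {w ∈ S | x ∈ w.1} ∪ {w ∈ S | y ∈ w.1} := by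
    rw [← filter_or, hxy]
    ext w
    simp only [mem_filter, disjoint_insert_right, disjoint_singleton_right, not_and_or, not_not]
  have hinter : {w ∈ S | x ∈ w.1} ∩ {w ∈ S | y ∈ w.1} = {v} := by
    rw [← filter_and]
    ext w
    simp only [mem_filter, mem_singleton]
    constructor
    · rintro ⟨-, hx, hy⟩
      have hsub : v.1 ⊆ w.1 := by rw [hxy]; exact insert_subset hx (singleton_subset_iff.2 hy)
      exact (Subtype.ext (eq_of_subset_of_card_le hsub (by rw [v.2, w.2]))).symm
    · rintro rfl
      simp [hv, hxy]
  rw [pairDegree, pairDegree, ← card_union_add_card_inter, hunion, hinter, card_singleton]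

end TwoSubsets

theorem exists_add_eq_four_of_sum_eq_ten (d : Fin 5 → ℕ) (hd : ∀ i, d i ≤ 4)
    (hsum : ∑ i, d i = 10) : ∃ i j, i ≠ j ∧ d i + d j = 4 := by
  rw [Fin.sum_univ_five] at hsum
  by_contra! h
  simp only [ne_eq, Fin.forall_fin_succ, Fin.isValue, Fin.succ_zero_eq_one, Fin.succ_one_eq_two,
    Fin.reduceSucc, IsEmpty.forall_iff, and_true, not_true_eq_false, zero_ne_one,
    not_false_eq_true, forall_const, Fin.reduceEq, true_and, Fin.succ_ne_zero] at h hd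
  omega

theorem card_petersenVertices : Fintype.card {s : Finset (Fin 5) // s.card = 2} = 10 := by
  rw [Fintype.card_finset_len]; rfl

theorem pairDegree_filter_true_add_pairDegree_filter_false
    (c : {s : Finset (Fin 5) // s.card = 2} → Bool) (x : Fin 5) :
    pairDegree {w | c w = true} x + pairDegree {w | c w = false} x = 4 := by
  have h4 : #{w : {s : Finset (Fin 5) // s.card = 2} | x ∈ w.1} = 4 := by revert x; decide
  rw [← h4, ← card_filter_add_card_filter_not (s := {w | x ∈ w.1}) (fun w => c w = true)]
  simp only [pairDegree, filter_filter, Bool.not_eq_true, and_comm]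

theorem IsKBisection.five_le_pairDegree_add_pairDegree
    {c : {s : Finset (Fin 5) // s.card = 2} → Bool} (hc : IsKBisection petersenGraph c 2)
    {v : {s : Finset (Fin 5) // s.card = 2}} {x y : Fin 5} (hxy : v.1 = {x, y}) :
    5 ≤ pairDegree {w | c w = c v} x + pairDegree {w | c w = c v} y := by
  have hS : #{w | c w = c v} = 5 := by
    have := hc.two_mul_card_filter (c v)
    rw [card_petersenVertices] at this
    omega
  set S : Finset _ := {w | c w = c v}
  have hneighbors :
      (monoSubgraph petersenGraph c).neighborSet v = ↑{w ∈ S | Disjoint w.1 v.1} := by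
    ext w
    simp only [mem_neighborSet, monoSubgraph, petersenGraph, coe_filter, S, mem_filter,
      mem_univ, true_and, Set.mem_ofPred_eq]
    refine ⟨fun ⟨⟨_, hvw⟩, hcol⟩ => ⟨hcol.symm, hvw.symm⟩,
      fun ⟨hcol, hwv⟩ => ⟨⟨?_, hwv.symm⟩, hcol.symm⟩⟩
    rintro rfl
    simpa [(disjoint_self_iff_empty _).1 hwv] using v.2
  have hmono := hc.ncard_neighborSet_add_one_le v
  rw [hneighbors, Set.ncard_coe_finset] at hmono
  have hsplit := card_filter_add_card_filter_not (s := S) (fun w => Disjoint w.1 v.1)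
  have := pairDegree_add_pairDegree S (mem_filter.2 ⟨mem_univ _, rfl⟩) hxy
  omega

/-- The Petersen graph does not admit a 2-bisection. -/
theorem petersen_no_two_bisection :
    ¬ ∃ c : {s : Finset (Fin 5) // s.card = 2} → Bool,
      IsKBisection petersenGraph c 2 := by
  rintro ⟨c, hc⟩
  have hcompl := pairDegree_filter_true_add_pairDegree_filter_false c
  have hsum : ∑ x, pairDegree {w | c w = true} x = 10 := by
    rw [sum_pairDegree, hc.two_mul_card_filter, card_petersenVertices]
  obtain ⟨x, y, hxy, hd⟩ :=
    exists_add_eq_four_of_sum_eq_ten _ (fun x => Nat.le.intro (hcompl x)) hsum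
  have hclass := hc.five_le_pairDegree_add_pairDegree (v := ⟨{x, y}, card_pair hxy⟩) rfl
  have := hcompl x
  have := hcompl y
  cases hv : c ⟨{x, y}, card_pair hxy⟩ <;> simp only [hv] at hclass <;> omega
end

section
/- Let H be a bridgeless cubic multigraph and let H△ be the cubic graph obtained from H by replacing every vertex with a triangle (the truncation of H). Then H△ admits a 2-bisection. -/
open SimpleGraph Finset

/- Multigraph machinery: a multigraph is given by an edge-indexed family of
(arbitrarily oriented) endpoint pairs `ends : E → V × V`.  A *dart* is a pair
`(e, i) : E × Fin 2`, a half-edge of `e`; loops contribute two darts at the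
same vertex, so degrees are counted correctly. -/

/-- The vertex at which the dart `d` is based. -/
def dartVert {V E : Type*} (ends : E → V × V) (d : E × Fin 2) : V :=
  if d.2 = 0 then (ends d.1).1 else (ends d.1).2

/-- The multigraph is cubic: every vertex carries exactly 3 darts. -/
def MCubic {V E : Type*} (ends : E → V × V) : Prop :=
  ∀ v : V, {d : E × Fin 2 | dartVert ends d = v}.ncard = 3

/-- Reachability in the multigraph using only edges from `S`. -/
def MReach {V E : Type*} (ends : E → V × V) (S : Set E) : V → V → Prop :=
  Relation.ReflTransGen (fun u v => ∃ e ∈ S, ends e = (u, v) ∨ ends e = (v, u))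

/-- The multigraph is bridgeless: deleting any single edge does not destroy
reachability between any two vertices. -/
def MBridgeless {V E : Type*} (ends : E → V × V) : Prop :=
  ∀ e₀ : E, ∀ u v : V, MReach ends Set.univ u v → MReach ends {e | e ≠ e₀} u v

/-- The truncation `H△` of the multigraph: each vertex is replaced by a triangle
on its darts; two darts are adjacent iff they are based at the same vertex
(triangle edges) or are the two darts of one edge of `H`. -/
def truncation {V E : Type*} (ends : E → V × V) : SimpleGraph (E × Fin 2) where
  Adj d d' := d ≠ d' ∧ (dartVert ends d = dartVert ends d' ∨ d.1 = d'.1)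
  symm := ⟨fun d d' h => ⟨h.1.symm, h.2.imp Eq.symm Eq.symm⟩⟩
  loopless := ⟨fun d h => h.1 rfl⟩

/-- `M` is a perfect matching of the multigraph: every vertex carries exactly
one dart of an edge of `M`. -/
def MPerfectMatching {V E : Type*} (ends : E → V × V) (M : Set E) : Prop :=
  ∀ v : V, {d : E × Fin 2 | d.1 ∈ M ∧ dartVert ends d = v}.ncard = 1

/-!
Colour the darts of `H` (the vertices of `H△`) so that the two darts of every edge of `H` get
different colours. Then the colour classes are swapped by the edge flip, hence have equal size,
and every edge of `H△` joining two triangles is bichromatic, so monochromatic components lie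
inside triangles. It remains to make no triangle monochromatic, i.e. to orient `H` without
sources and sinks. This works for any multigraph in which every vertex has degree at least two:
splitting off two darts `d₁`, `d₂` at a vertex `v` (replacing the edges `d₁ f d₁`, `d₂ f d₂` by a
loop `d₁ d₂` and an edge `f d₁ f d₂`) lowers the number of vertices still to be treated, and an
orientation of the new multigraph transfers back after recolouring `d₁` and `d₂` only.
-/

open Function

section Pairing

variable {D V : Type*}

/- A fixed-point-free involution `f` of a set `D` of darts pairs the darts into the edges of a
multigraph, whose vertices are read off through a map `D → V`. -/
def SeparatesPairs (f : D → D) (col : D → Bool) : Prop :=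
  ∀ d, col (f d) = !col d

theorem exists_separatesPairs {f : D → D} (hf : Involutive f) (hfix : ∀ d, f d ≠ d) :
    ∃ col, SeparatesPairs f col := by
  let e : D ↪ Cardinal := embeddingToCardinal
  refine ⟨fun d => decide (e d < e (f d)), fun d => ?_⟩
  have hne : e d ≠ e (f d) := e.injective.ne (hfix d).symm
  rcases hne.lt_or_gt with h | h <;> simp [hf d, h, h.not_gt]

theorem SeparatesPairs.ncard_true_eq_ncard_false {f : D → D} {col : D → Bool}
    (h : SeparatesPairs f col) (hf : Involutive f) :
    {d | col d = true}.ncard = {d | col d = false}.ncard := by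
  have hpre : f ⁻¹' {d | col d = true} = {d | col d = false} := by
    ext d
    simp [h d]
  rw [← hpre, Set.ncard_preimage_of_injective_subset_range hf.injective
    (by simp [hf.surjective.range_eq])]

section SplitOff

variable [DecidableEq D] {f : D → D} {d₁ d₂ : D}

/-- Splitting off: the pairs `{d₁, f d₁}` and `{d₂, f d₂}` become `{d₁, d₂}` and `{f d₁, f d₂}`. -/
def splitOff (f : D → D) (d₁ d₂ : D) : D → D :=
  Equiv.swap d₁ (f d₂) ∘ f ∘ Equiv.swap d₁ (f d₂)

theorem Function.Involutive.splitOff (hf : Involutive f) (d₁ d₂ : D) :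
    Involutive (splitOff f d₁ d₂) := by
  intro d
  simp [_root_.splitOff, hf _]

theorem splitOff_ne_self (hfix : ∀ d, f d ≠ d) (d : D) : splitOff f d₁ d₂ d ≠ d := by
  intro h
  apply hfix (Equiv.swap d₁ (f d₂) d)
  simpa [splitOff] using congrArg (Equiv.swap d₁ (f d₂)) h

theorem splitOff_apply_of_ne (hf : Involutive f) {d : D} (h₁ : d ≠ d₁) (h₂ : d ≠ d₂)
    (h₃ : f d ≠ d₁) (h₄ : f d ≠ d₂) : splitOff f d₁ d₂ d = f d := by
  have h₅ : d ≠ f d₂ := fun h => h₄ (by rw [h, hf])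
  have h₆ : f d ≠ f d₂ := hf.injective.ne h₂
  simp [splitOff, Equiv.swap_apply_of_ne_of_ne h₁ h₅, Equiv.swap_apply_of_ne_of_ne h₃ h₆]

theorem splitOff_apply_right (hf : Involutive f) (hfix : ∀ d, f d ≠ d) (h₁₂ : d₁ ≠ d₂) :
    splitOff f d₁ d₂ (f d₂) = f d₁ := by
  simp [splitOff, Equiv.swap_apply_of_ne_of_ne (hfix d₁) (hf.injective.ne h₁₂)]

theorem exists_separatesPairs_of_splitOff (hf : Involutive f) (hfix : ∀ d, f d ≠ d)
    (h₁₂ : d₁ ≠ d₂) (hloop : f d₁ ≠ d₂) {col' : D → Bool}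
    (hcol' : SeparatesPairs (splitOff f d₁ d₂) col') :
    ∃ col, SeparatesPairs f col ∧ col d₁ ≠ col d₂ ∧ ∀ d, d ≠ d₁ → d ≠ d₂ → col d = col' d := by
  have hloop' : f d₂ ≠ d₁ := fun h => hloop (by rw [← h, hf])
  let col d := if d = d₁ ∨ d = d₂ then !col' (f d) else col' d
  have hcol₁ : col (f d₁) = col' (f d₁) := if_neg (by simp [hfix d₁, hloop])
  have hcol₂ : col (f d₂) = col' (f d₂) := if_neg (by simp [hfix d₂, hloop'])
  refine ⟨col, fun d => ?_, ?_, fun d h₁ h₂ => if_neg (by simp [h₁, h₂])⟩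
  · by_cases hd : d = d₁ ∨ d = d₂
    · rcases hd with rfl | rfl <;> simp [col, hcol₁, hcol₂]
    by_cases hfd : f d = d₁ ∨ f d = d₂
    · simp only [col, hfd, hd, hf d, if_true, if_false]
    · simp only [col, hd, hfd, if_false]
      push Not at hd hfd
      rw [← splitOff_apply_of_ne hf hd.1 hd.2 hfd.1 hfd.2, hcol']
  · have : col' (f d₁) = !col' (f d₂) := by
      rw [← splitOff_apply_right hf hfix h₁₂, hcol']
    simp [col, this]

end SplitOff

theorem exists_separatesPairs_forall_mem_exists_ne {f : D → D} (hf : Involutive f)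
    (hfix : ∀ d, f d ≠ d) (vert : D → V) (A : Finset V)
    (hA : ∀ v ∈ A, ∃ d₁ d₂, d₁ ≠ d₂ ∧ vert d₁ = v ∧ vert d₂ = v) :
    ∃ col, SeparatesPairs f col ∧
      ∀ v ∈ A, ∃ d₁ d₂, vert d₁ = v ∧ vert d₂ = v ∧ col d₁ ≠ col d₂ := by
  classical
  induction A using Finset.induction_on generalizing f with
  | empty => simpa using exists_separatesPairs hf hfix
  | insert v A hvA ih =>
    obtain ⟨d₁, d₂, h₁₂, hd₁, hd₂⟩ := hA v (Finset.mem_insert_self v A)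
    have hA' : ∀ w ∈ A, ∃ d₁ d₂, d₁ ≠ d₂ ∧ vert d₁ = w ∧ vert d₂ = w :=
      fun w hw => hA w (Finset.mem_insert_of_mem hw)
    by_cases hloop : f d₁ = d₂
    · obtain ⟨col, hcol, hA⟩ := ih hf hfix hA'
      refine ⟨col, hcol, Finset.forall_mem_insert _ _ _ |>.mpr ⟨?_, hA⟩⟩
      exact ⟨d₁, d₂, hd₁, hd₂, by simp [← hloop, hcol d₁]⟩
    obtain ⟨col', hcol', hA⟩ := ih (hf.splitOff d₁ d₂) (splitOff_ne_self hfix) hA'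
    obtain ⟨col, hcol, hcol₁₂, hagree⟩ :=
      exists_separatesPairs_of_splitOff hf hfix h₁₂ hloop hcol'
    refine ⟨col, hcol, Finset.forall_mem_insert _ _ _ |>.mpr ⟨⟨d₁, d₂, hd₁, hd₂, hcol₁₂⟩, ?_⟩⟩
    intro w hw
    obtain ⟨e₁, e₂, he₁, he₂, hne⟩ := hA w hw
    have hv : ∀ e, vert e = w → e ≠ d₁ ∧ e ≠ d₂ := by
      rintro e rfl
      exact ⟨fun h => hvA (by rwa [h, hd₁] at hw), fun h => hvA (by rwa [h, hd₂] at hw)⟩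
    refine ⟨e₁, e₂, he₁, he₂, ?_⟩
    rwa [hagree e₁ (hv e₁ he₁).1 (hv e₁ he₁).2, hagree e₂ (hv e₂ he₂).1 (hv e₂ he₂).2]

end Pairing

section Truncation

variable {V E : Type*}

def dartFlip : E × Fin 2 → E × Fin 2 :=
  Prod.map id Fin.rev

theorem involutive_dartFlip : Involutive (dartFlip (E := E)) :=
  fun d => by simp [dartFlip, Prod.map]

theorem dartFlip_ne_self (d : E × Fin 2) : dartFlip d ≠ d := by
  obtain ⟨e, i⟩ := d
  fin_cases i <;> simp [dartFlip]

theorem eq_dartFlip_of_fst_eq {d d' : E × Fin 2} (h : d.1 = d'.1) (hne : d ≠ d') :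
    d' = dartFlip d := by
  obtain ⟨e, i⟩ := d
  obtain ⟨e', i'⟩ := d'
  obtain rfl : e = e' := h
  fin_cases i <;> fin_cases i' <;> simp_all [dartFlip]

theorem MCubic.exists_ne_dartVert_eq {ends : E → V × V} (hcubic : MCubic ends) (v : V) :
    ∃ d₁ d₂, d₁ ≠ d₂ ∧ dartVert ends d₁ = v ∧ dartVert ends d₂ = v := by
  have hfin : {d | dartVert ends d = v}.Finite :=
    Set.finite_of_ncard_pos (by rw [hcubic v]; norm_num)
  obtain ⟨d₁, hd₁, d₂, hd₂, hne⟩ := (Set.one_lt_ncard hfin).mp (by rw [hcubic v]; norm_num)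
  exact ⟨d₁, d₂, hne, hd₁, hd₂⟩

variable {ends : E → V × V} {col : E × Fin 2 → Bool}

theorem SeparatesPairs.dartVert_eq_of_reachable (hcol : SeparatesPairs dartFlip col)
    {d d' : E × Fin 2} (hr : (monoSubgraph (truncation ends) col).Reachable d d') :
    dartVert ends d' = dartVert ends d ∧ col d' = col d := by
  obtain ⟨p⟩ := hr
  induction p with
  | nil => exact ⟨rfl, rfl⟩
  | cons hadj _ ih =>
    obtain ⟨⟨hne, hvert | hedge⟩, hsame⟩ := hadj
    · exact ⟨ih.1.trans hvert.symm, ih.2.trans hsame.symm⟩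
    · rw [eq_dartFlip_of_fst_eq hedge hne, hcol] at hsame
      simp at hsame

theorem SeparatesPairs.ncard_reachable_le_two (hcubic : MCubic ends)
    (hcol : SeparatesPairs dartFlip col) {d d₁ d₂ : E × Fin 2}
    (hd₁ : dartVert ends d₁ = dartVert ends d) (hd₂ : dartVert ends d₂ = dartVert ends d)
    (hne : col d₁ ≠ col d₂) :
    {w | (monoSubgraph (truncation ends) col).Reachable d w}.ncard ≤ 2 := by
  set triangle := {w | dartVert ends w = dartVert ends d}
  obtain ⟨dbad, hbad, hbad_col⟩ : ∃ dbad ∈ triangle, col dbad ≠ col d := by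
    by_cases h : col d₁ = col d
    · exact ⟨d₂, hd₂, h ▸ hne.symm⟩
    · exact ⟨d₁, hd₁, h⟩
  have hsub : {w | (monoSubgraph (truncation ends) col).Reachable d w} ⊆ triangle \ {dbad} :=
    fun w hw => ⟨(hcol.dartVert_eq_of_reachable hw).1,
      fun h => hbad_col (h ▸ (hcol.dartVert_eq_of_reachable hw).2)⟩
  have hfin : triangle.Finite := Set.finite_of_ncard_pos (by rw [hcubic]; norm_num)
  calc _ ≤ (triangle \ {dbad}).ncard := Set.ncard_le_ncard hsub hfin.sdiff
    _ = 2 := by rw [Set.ncard_sdiff_singleton_of_mem hbad, hcubic]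

end Truncation

theorem truncation_two_bisection_general {V E : Type*} [Fintype E]
    (ends : E → V × V) (hcubic : MCubic ends) :
    ∃ c : E × Fin 2 → Bool, IsKBisection (truncation ends) c 2 := by
  classical
  obtain ⟨col, hcol, hbichromatic⟩ := exists_separatesPairs_forall_mem_exists_ne
    involutive_dartFlip dartFlip_ne_self (dartVert ends) (Finset.univ.image (dartVert ends))
    fun v _ => hcubic.exists_ne_dartVert_eq v
  refine ⟨col, hcol.ncard_true_eq_ncard_false involutive_dartFlip, fun d => ?_⟩
  obtain ⟨d₁, d₂, hd₁, hd₂, hne⟩ := hbichromatic _ (Finset.mem_image_of_mem _ (Finset.mem_univ d))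
  exact hcol.ncard_reachable_le_two hcubic hd₁ hd₂ hne

/-- The truncation of a bridgeless cubic multigraph admits a 2-bisection. -/
theorem truncation_two_bisection {V E : Type*} [Fintype V] [Fintype E]
    (ends : E → V × V) (hcubic : MCubic ends) (hbridgeless : MBridgeless ends) :
    ∃ c : E × Fin 2 → Bool, IsKBisection (truncation ends) c 2 :=
  truncation_two_bisection_general ends hcubic
end

section
/- Let G be obtained from a graph H' admitting a 2-bisection by replacing some edges of H' (edges not lying in monochromatic components of size 2 need no restriction; any edges may be replaced) with strings of diamonds. Then G admits a 2-bisection. -/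
open SimpleGraph Finset

/-- Vertex type of the graph obtained from a graph on `V` by replacing each
(oriented) edge `p ∈ R` by a string of `k p` diamonds. -/
def StringVert {V : Type*} (R : Finset (V × V)) (k : V × V → ℕ) : Type _ :=
  V ⊕ (Σ p : {p : V × V // p ∈ R}, Fin (k p.1) × Fin 4)

/-- One direction of the adjacency relation of the diamond-string replacement:
original edges not in `R` survive; the edge `p = (u,v) ∈ R` is replaced by the
string `D₁,…,D_{k p}`, joining `u` to vertex `0` of `D₁`, vertex `1` of `Dᵢ` to
vertex `0` of `Dᵢ₊₁`, and vertex `1` of `D_{k p}` to `v`. -/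
def stringRel {V : Type*} (H : SimpleGraph V) (R : Finset (V × V)) (k : V × V → ℕ) :
    StringVert R k → StringVert R k → Prop
  | Sum.inl u, Sum.inl v => H.Adj u v ∧ (u, v) ∉ R ∧ (v, u) ∉ R
  | Sum.inl u, Sum.inr ⟨p, i, j⟩ =>
      (u = p.1.1 ∧ i.val = 0 ∧ j = 0) ∨ (u = p.1.2 ∧ i.val = k p.1 - 1 ∧ j = 1)
  | Sum.inr _, Sum.inl _ => False
  | Sum.inr ⟨p, i, j⟩, Sum.inr ⟨q, i', j'⟩ =>
      p = q ∧ ((i.val = i'.val ∧ diamondGraph.Adj j j') ∨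
        (i'.val = i.val + 1 ∧ j = 1 ∧ j' = 0))

/-- The graph obtained from `H` by replacing each edge in `R` by a string of
diamonds. -/
def stringGraph {V : Type*} (H : SimpleGraph V) (R : Finset (V × V)) (k : V × V → ℕ) :
    SimpleGraph (StringVert R k) where
  Adj x y := x ≠ y ∧ (stringRel H R k x y ∨ stringRel H R k y x)
  symm := ⟨fun x y h => ⟨h.1.symm, h.2.symm⟩⟩
  loopless := ⟨fun x h => h.1 rfl⟩


/-!
Colour the vertices of `H'` by a 2-bisection `c`, and the diamond `Dᵢ` of the string replacing
`(u, v)` by `a, b, ¬a, ¬b` on its vertices `0, 1, 2, 3`, where `a = ¬c(u)`, and `b = c(u)` except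
in the last diamond, where `b = ¬c(v)`. Then every edge leaving a diamond joins vertices of
different colours (`u` and vertex `0` of `D₁`, vertex `1` of `Dᵢ` and vertex `0` of `Dᵢ₊₁`,
vertex `1` of the last diamond and `v`), so a monochromatic component of the new graph is either
a monochromatic component of `H'` or one of the two colour classes of a diamond, of size two.
Each diamond is balanced, and `j ↦ j + 2` exchanges its colour classes.
-/

lemma SimpleGraph.Reachable.mem_of_adj_closed {W : Type*} {G : SimpleGraph W} {S : Set W}
    (hS : ∀ ⦃x y⦄, G.Adj x y → x ∈ S → y ∈ S) {x y : W} (h : G.Reachable x y) (hx : x ∈ S) :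
    y ∈ S := by
  obtain ⟨w⟩ := h
  induction w with
  | nil => exact hx
  | cons hadj _ ih => exact ih (hS hadj hx)

lemma SimpleGraph.ncard_setOf_reachable_le {W : Type*} {G : SimpleGraph W} {S : Set W}
    (hS : ∀ ⦃x y⦄, G.Adj x y → x ∈ S → y ∈ S) (hfin : S.Finite) {x : W} (hx : x ∈ S) :
    {y | G.Reachable x y}.ncard ≤ S.ncard :=
  Set.ncard_le_ncard (fun _ h => h.mem_of_adj_closed hS hx) hfin

lemma Set.ncard_setOf_sum {α β : Type*} [Finite α] [Finite β] (P : α ⊕ β → Prop) :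
    {x | P x}.ncard = {a | P (.inl a)}.ncard + {b | P (.inr b)}.ncard := by
  rw [← Set.image_preimage_inl_union_image_preimage_inr {x | P x},
    Set.ncard_union_eq Set.disjoint_image_inl_image_inr,
    Set.ncard_image_of_injective _ Sum.inl_injective,
    Set.ncard_image_of_injective _ Sum.inr_injective]
  rfl

lemma ncard_setOf_true_eq_ncard_setOf_false_of_involutive {β : Type*} {g : β → Bool} {φ : β → β}
    (hφ : φ.Involutive) (hg : ∀ y, g (φ y) = !g y) :
    {y | g y = true}.ncard = {y | g y = false}.ncard := by
  have himage : φ '' {y | g y = true} = {y | g y = false} := by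
    ext y
    simp [hφ.image_eq_preimage_symm, hg]
  rw [← himage, Set.ncard_image_of_injective _ hφ.injective]

def diamondColoring (a b : Bool) : Fin 4 → Bool := ![a, b, !a, !b]

lemma diamondColoring_add_two (a b : Bool) (j : Fin 4) :
    diamondColoring a b (j + 2) = !diamondColoring a b j := by
  revert a b j; decide

lemma ncard_setOf_diamondColoring_eq (a b e : Bool) :
    {j | diamondColoring a b j = e}.ncard = 2 := by
  rw [Set.ncard_eq_toFinset_card']
  revert a b e; decide

section StringColoring

variable {V : Type*} {R : Finset (V × V)} {k : V × V → ℕ}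

def stringColoring (c : V → Bool) : StringVert R k → Bool
  | .inl v => c v
  | .inr ⟨p, i, j⟩ =>
      diamondColoring (!c p.1.1) (if i.val = k p.1 - 1 then !c p.1.2 else c p.1.1) j

variable {H : SimpleGraph V} {c : V → Bool}

lemma monoSubgraph_stringGraph_adj_inl {u : V} {y : StringVert R k}
    (h : (monoSubgraph (stringGraph H R k) (stringColoring c)).Adj (.inl u) y) :
    ∃ w, y = .inl w ∧ (monoSubgraph H c).Adj u w := by
  obtain ⟨⟨-, hrel⟩, hcol⟩ := h
  rcases y with w | ⟨p, i, j⟩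
  · exact ⟨w, rfl, hrel.elim (·.1) (·.1.symm), hcol⟩
  · exfalso
    simp only [stringRel, or_false] at hrel
    rcases hrel with ⟨rfl, -, rfl⟩ | ⟨rfl, hi, rfl⟩ <;> simp_all [stringColoring, diamondColoring]

lemma monoSubgraph_stringGraph_adj_inr {p : {p : V × V // p ∈ R}} {i : Fin (k p)} {j : Fin 4}
    {y : StringVert R k}
    (h : (monoSubgraph (stringGraph H R k) (stringColoring c)).Adj (.inr ⟨p, i, j⟩) y) :
    ∃ j', y = .inr ⟨p, i, j'⟩ := by
  obtain ⟨⟨-, hrel⟩, hcol⟩ := h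
  rcases y with w | ⟨q, i', j'⟩
  · exfalso
    simp only [stringRel, false_or] at hrel
    rcases hrel with ⟨rfl, -, rfl⟩ | ⟨rfl, hi, rfl⟩ <;> simp_all [stringColoring, diamondColoring]
  · simp only [stringRel] at hrel
    rcases hrel with ⟨hpq, ⟨hi, -⟩ | ⟨hi, rfl, rfl⟩⟩ | ⟨hqp, ⟨hi, -⟩ | ⟨hi, rfl, rfl⟩⟩ <;>
      subst q
    · exact ⟨j', by rw [Fin.ext hi]⟩
    · have : i.val ≠ k p - 1 := by omega
      simp_all [stringColoring, diamondColoring]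
    · exact ⟨j', by rw [Fin.ext hi]⟩
    · have : i'.val ≠ k p - 1 := by omega
      simp_all [stringColoring, diamondColoring]

lemma ncard_stringColoring_eq_true_eq_false [Finite V]
    (hc : {v | c v = true}.ncard = {v | c v = false}.ncard) :
    {x : StringVert R k | stringColoring c x = true}.ncard =
      {x : StringVert R k | stringColoring c x = false}.ncard := by
  let φ (q : Σ p : {p : V × V // p ∈ R}, Fin (k p.1) × Fin 4) :
      Σ p : {p : V × V // p ∈ R}, Fin (k p.1) × Fin 4 :=
    ⟨q.1, q.2.1, q.2.2 + 2⟩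
  have hφ : φ.Involutive := fun ⟨p, i, j⟩ => by simp [φ, add_assoc]
  have hdiamonds := ncard_setOf_true_eq_ncard_setOf_false_of_involutive
    (g := fun q => stringColoring c (.inr q : StringVert R k)) hφ
    fun ⟨_, _, j⟩ => diamondColoring_add_two _ _ j
  have hsplit (b : Bool) := Set.ncard_setOf_sum (α := V)
    (β := Σ p : {p : V × V // p ∈ R}, Fin (k p.1) × Fin 4) (fun x => stringColoring c x = b)
  exact (hsplit true).trans ((congrArg₂ (· + ·) hc hdiamonds).trans (hsplit false).symm)

lemma ncard_setOf_reachable_inl_le [Finite V] (v : V) :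
    {y | (monoSubgraph (stringGraph H R k) (stringColoring c)).Reachable (.inl v) y}.ncard ≤
      {w | (monoSubgraph H c).Reachable v w}.ncard := by
  have hclosed : ∀ ⦃x y⦄, (monoSubgraph (stringGraph H R k) (stringColoring c)).Adj x y →
      x ∈ Sum.inl '' {w | (monoSubgraph H c).Reachable v w} →
      y ∈ Sum.inl '' {w | (monoSubgraph H c).Reachable v w} := by
    rintro x y hxy ⟨u, hu, rfl⟩
    obtain ⟨w, rfl, huw⟩ := monoSubgraph_stringGraph_adj_inl hxy
    exact ⟨w, hu.trans huw.reachable, rfl⟩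
  calc _ ≤ (Sum.inl '' {w | (monoSubgraph H c).Reachable v w} : Set (StringVert R k)).ncard :=
        ncard_setOf_reachable_le hclosed ((Set.toFinite _).image _) ⟨v, .rfl, rfl⟩
    _ = _ := Set.ncard_image_of_injective _ Sum.inl_injective

lemma ncard_setOf_reachable_inr_le_two (p : {p : V × V // p ∈ R}) (i : Fin (k p)) (j : Fin 4) :
    {y | (monoSubgraph (stringGraph H R k) (stringColoring c)).Reachable (.inr ⟨p, i, j⟩) y}.ncard
      ≤ 2 := by
  set e := stringColoring c (.inr ⟨p, i, j⟩ : StringVert R k)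
  set S : Set (StringVert R k) := (fun j' => .inr ⟨p, i, j'⟩) ''
    {j' | stringColoring c (.inr ⟨p, i, j'⟩ : StringVert R k) = e}
  have hclosed : ∀ ⦃x y⦄, (monoSubgraph (stringGraph H R k) (stringColoring c)).Adj x y →
      x ∈ S → y ∈ S := by
    rintro x y hxy ⟨j', hj', rfl⟩
    obtain ⟨j'', rfl⟩ := monoSubgraph_stringGraph_adj_inr hxy
    exact ⟨j'', hxy.2.symm.trans hj', rfl⟩
  calc _ ≤ S.ncard := ncard_setOf_reachable_le hclosed ((Set.toFinite _).image _) ⟨j, rfl, rfl⟩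
    _ = _ := Set.ncard_image_of_injective _ (fun j₁ j₂ h => by cases h; rfl)
    _ = 2 := ncard_setOf_diamondColoring_eq _ _ _

end StringColoring

theorem stringGraph_two_bisection_general {V : Type*} [Fintype V]
    (H : SimpleGraph V) (R : Finset (V × V)) (k : V × V → ℕ)
    (hH : ∃ c : V → Bool, IsKBisection H c 2) :
    ∃ c : StringVert R k → Bool, IsKBisection (stringGraph H R k) c 2 := by
  obtain ⟨c, hbalanced, hcomponents⟩ := hH
  refine ⟨stringColoring c, ncard_stringColoring_eq_true_eq_false hbalanced, ?_⟩
  rintro (v | ⟨p, i, j⟩)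
  · exact (ncard_setOf_reachable_inl_le v).trans (hcomponents v)
  · exact ncard_setOf_reachable_inr_le_two p i j

/-- If `H'` admits a 2-bisection, then the graph obtained from `H'` by
replacing any set of edges by strings of diamonds admits a 2-bisection. -/
theorem stringGraph_two_bisection {V : Type*} [Fintype V] [DecidableEq V]
    (H : SimpleGraph V) (R : Finset (V × V)) (k : V × V → ℕ)
    (hR : ∀ p ∈ R, H.Adj p.1 p.2) (hRsym : ∀ p ∈ R, (p.2, p.1) ∉ R)
    (hk : ∀ p ∈ R, 1 ≤ k p)
    (hH : ∃ c : V → Bool, IsKBisection H c 2) :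
    ∃ c : StringVert R k → Bool, IsKBisection (stringGraph H R k) c 2 :=
  stringGraph_two_bisection_general H R k hH
end

section
/- Every bridgeless cubic multigraph has a perfect matching. -/
open SimpleGraph Finset

/-!
Petersen's argument, through Tutte's theorem. In a cubic multigraph the number of edges leaving
a vertex set `C` has the parity of `3 |C|`, so an odd component of `G - u` is left by an odd
number of edges; since no edge is a bridge, it is left by at least three. All of these edges end
in `u`, each of them leaves only one component, and `u` carries only `3 |u|` edge ends, so `G - u`
has at most `|u|` odd components. Tutte's theorem then gives a perfect matching of the underlying
simple graph, which lifts to the multigraph by choosing one edge for each matched pair.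
-/

open scoped Classical

section Multigraph

variable {V E : Type*} (ends : E → V × V)

noncomputable def endCount (C : Set V) (e : E) : ℕ :=
  (if (ends e).1 ∈ C then 1 else 0) + (if (ends e).2 ∈ C then 1 else 0)

def edgeBoundary (C : Set V) : Set E :=
  {e | ¬((ends e).1 ∈ C ↔ (ends e).2 ∈ C)}

variable {ends}

lemma endCount_cast_zmod_two (C : Set V) (e : E) :
    (endCount ends C e : ZMod 2) = if e ∈ edgeBoundary ends C then 1 else 0 := by
  unfold endCount edgeBoundary
  by_cases h1 : (ends e).1 ∈ C <;> by_cases h2 : (ends e).2 ∈ C <;> simp [h1, h2]; decide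

lemma one_le_endCount {u : Set V} {e : E} {x y : V} (hy : y ∈ u)
    (hends : ends e = (x, y) ∨ ends e = (y, x)) : 1 ≤ endCount ends u e := by
  unfold endCount
  rcases hends with h | h <;> simp [h, hy]

lemma MReach.mem_of_mem {S : Set E} {C : Set V}
    (hS : ∀ e ∈ S, ((ends e).1 ∈ C ↔ (ends e).2 ∈ C)) {x y : V} (h : MReach ends S x y)
    (hx : x ∈ C) : y ∈ C := by
  induction h with
  | refl => exact hx
  | tail _ hstep ih =>
    obtain ⟨e, he, hends | hends⟩ := hstep <;> have := hS e he <;> simp_all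

lemma ncard_edgeBoundary_ne_one (hbridgeless : MBridgeless ends) (C : Set V) :
    (edgeBoundary ends C).ncard ≠ 1 := by
  intro h
  obtain ⟨e₀, he₀⟩ := Set.ncard_eq_one.mp h
  have hS : ∀ e ∈ {e | e ≠ e₀}, ((ends e).1 ∈ C ↔ (ends e).2 ∈ C) := fun e he => by
    by_contra hcross
    exact he (he₀ ▸ hcross : e ∈ ({e₀} : Set E))
  have hreach := hbridgeless e₀ _ _ (.single ⟨e₀, trivial, .inl rfl⟩)
  have hcross : e₀ ∈ edgeBoundary ends C := he₀ ▸ rfl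
  by_cases h1 : (ends e₀).1 ∈ C
  · exact hcross (iff_of_true h1 (hreach.mem_of_mem hS h1))
  · exact hcross (iff_of_false h1
      (hreach.mem_of_mem (C := Cᶜ) (fun e he => not_congr (hS e he)) h1))

variable [Fintype V] [Fintype E]

omit [Fintype V] in
lemma card_filter_dartVert_eq (hcubic : MCubic ends) (v : V) :
    #{d : E × Fin 2 | dartVert ends d = v} = 3 := by
  rw [← hcubic v, Set.ncard_eq_toFinset_card']
  simp

lemma sum_endCount (hcubic : MCubic ends) (C : Set V) :
    ∑ e, endCount ends C e = 3 * C.ncard := by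
  calc ∑ e, endCount ends C e = #{d : E × Fin 2 | dartVert ends d ∈ C} := by
        rw [card_filter, Fintype.sum_prod_type]
        simp only [Fin.sum_univ_two, endCount, dartVert]
        simp
    _ = ∑ v ∈ C.toFinset, #{d : E × Fin 2 | dartVert ends d = v} := by
        rw [card_eq_sum_card_fiberwise (f := dartVert ends) (t := C.toFinset)
          (fun d hd => by simpa using hd)]
        refine sum_congr rfl fun v hv => congrArg card ?_
        ext d
        simp only [mem_filter, mem_univ, true_and, and_iff_right_iff_imp]
        rintro rfl
        simpa using hv
    _ = 3 * C.ncard := by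
        simp [card_filter_dartVert_eq hcubic, Set.ncard_eq_toFinset_card', mul_comm]

lemma odd_ncard_edgeBoundary (hcubic : MCubic ends) {C : Set V} (hC : Odd C.ncard) :
    Odd (edgeBoundary ends C).ncard := by
  have hmod : ((edgeBoundary ends C).ncard : ZMod 2) = (3 * C.ncard : ℕ) := by
    rw [← sum_endCount hcubic, Nat.cast_sum]
    simp [endCount_cast_zmod_two, Set.ncard_eq_toFinset_card']
  rw [ZMod.natCast_eq_natCast_iff'] at hmod
  rw [Nat.odd_iff] at hC ⊢
  omega

lemma three_le_ncard_edgeBoundary (hcubic : MCubic ends) (hbridgeless : MBridgeless ends)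
    {C : Set V} (hC : Odd C.ncard) : 3 ≤ (edgeBoundary ends C).ncard := by
  obtain ⟨k, hk⟩ := odd_ncard_edgeBoundary hcubic hC
  have := ncard_edgeBoundary_ne_one hbridgeless C
  omega

end Multigraph

namespace SimpleGraph.ConnectedComponent

variable {V : Type*} {G : SimpleGraph V} {u : Set V}

lemma notMem_of_mem_image_supp_deleteVerts
    {c : ((⊤ : G.Subgraph).deleteVerts u).coe.ConnectedComponent} {x : V}
    (hx : x ∈ Subtype.val '' c.supp) : x ∉ u := by
  obtain ⟨⟨x, hxu⟩, -, rfl⟩ := hx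
  exact hxu.2

lemma eq_of_mem_image_supp_deleteVerts
    {c c' : ((⊤ : G.Subgraph).deleteVerts u).coe.ConnectedComponent} {x : V}
    (hx : x ∈ Subtype.val '' c.supp) (hx' : x ∈ Subtype.val '' c'.supp) : c = c' := by
  obtain ⟨x, hxc, rfl⟩ := hx
  obtain ⟨y, hyc', hxy⟩ := hx'
  rw [Subtype.val_injective hxy] at hyc'
  rw [← hxc, ← hyc']

lemma mem_image_supp_deleteVerts_of_adj
    {c : ((⊤ : G.Subgraph).deleteVerts u).coe.ConnectedComponent} {x y : V}
    (hx : x ∈ Subtype.val '' c.supp) (hy : y ∉ u) (hxy : G.Adj x y) :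
    y ∈ Subtype.val '' c.supp := by
  obtain ⟨x, hxc, rfl⟩ := hx
  refine ⟨⟨y, trivial, hy⟩, ?_, rfl⟩
  rw [mem_supp_iff, ← hxc]
  exact (connectedComponentMk_eq_of_adj (by simpa [x.2.2, hy] using hxy)).symm

end SimpleGraph.ConnectedComponent

section TutteCondition

variable {V E : Type*} (ends : E → V × V)

def underlyingGraph : SimpleGraph V :=
  fromEdgeSet (Set.range fun e => s((ends e).1, (ends e).2))

variable {ends}

lemma underlyingGraph_adj_ends {e : E} (he : (ends e).1 ≠ (ends e).2) :
    (underlyingGraph ends).Adj (ends e).1 (ends e).2 :=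
  fromEdgeSet_adj _ |>.mpr ⟨⟨e, rfl⟩, he⟩

variable {u : Set V}

lemma exists_ends_of_mem_edgeBoundary
    {c : ((⊤ : (underlyingGraph ends).Subgraph).deleteVerts u).coe.ConnectedComponent} {e : E}
    (he : e ∈ edgeBoundary ends (Subtype.val '' c.supp)) :
    ∃ x y, x ∈ Subtype.val '' c.supp ∧ y ∈ u ∧ (ends e = (x, y) ∨ ends e = (y, x)) := by
  have hu {x y : V} (hx : x ∈ Subtype.val '' c.supp) (hy : y ∉ Subtype.val '' c.supp)
      (hxy : (underlyingGraph ends).Adj x y) : y ∈ u := by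
    by_contra hyu
    exact hy (c.mem_image_supp_deleteVerts_of_adj hx hyu hxy)
  by_cases h1 : (ends e).1 ∈ Subtype.val '' c.supp
  · have h2 : (ends e).2 ∉ Subtype.val '' c.supp := fun h2 => he (iff_of_true h1 h2)
    have hne : (ends e).1 ≠ (ends e).2 := fun h => h2 (h ▸ h1)
    exact ⟨_, _, h1, hu h1 h2 (underlyingGraph_adj_ends hne), .inl rfl⟩
  · have h2 : (ends e).2 ∈ Subtype.val '' c.supp :=
      not_not.mp fun h2 => he (iff_of_false h1 h2)
    have hne : (ends e).1 ≠ (ends e).2 := fun h => h1 (h ▸ h2)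
    exact ⟨_, _, h2, hu h2 h1 (underlyingGraph_adj_ends hne).symm, .inr rfl⟩

lemma eq_of_mem_edgeBoundary_of_mem_edgeBoundary
    {c c' : ((⊤ : (underlyingGraph ends).Subgraph).deleteVerts u).coe.ConnectedComponent} {e : E}
    (he : e ∈ edgeBoundary ends (Subtype.val '' c.supp))
    (he' : e ∈ edgeBoundary ends (Subtype.val '' c'.supp)) : c = c' := by
  obtain ⟨x, y, hx, hy, hends⟩ := exists_ends_of_mem_edgeBoundary he
  have hy' : y ∉ Subtype.val '' c'.supp := fun h => c'.notMem_of_mem_image_supp_deleteVerts h hy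
  refine c.eq_of_mem_image_supp_deleteVerts hx (not_not.mp fun hx' => he' ?_)
  rcases hends with h | h <;> rw [h] <;> exact iff_of_false ‹_› ‹_›

lemma card_filter_mem_edgeBoundary_le_endCount
    (O : Finset ((⊤ : (underlyingGraph ends).Subgraph).deleteVerts u).coe.ConnectedComponent)
    (e : E) : #{c ∈ O | e ∈ edgeBoundary ends (Subtype.val '' c.supp)} ≤ endCount ends u e := by
  rcases (O.filter fun c => e ∈ edgeBoundary ends (Subtype.val '' c.supp)).eq_empty_or_nonempty
    with h | ⟨c, hc⟩
  · simp [h]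
  · obtain ⟨x, y, -, hy, hends⟩ := exists_ends_of_mem_edgeBoundary (mem_filter.mp hc).2
    refine le_trans (card_le_one.mpr fun a ha b hb => ?_) (one_le_endCount hy hends)
    exact eq_of_mem_edgeBoundary_of_mem_edgeBoundary (mem_filter.mp ha).2 (mem_filter.mp hb).2

variable [Fintype V] [Fintype E]

lemma ncard_oddComponents_deleteVerts_le (hcubic : MCubic ends) (hbridgeless : MBridgeless ends)
    (u : Set V) :
    ((⊤ : (underlyingGraph ends).Subgraph).deleteVerts u).coe.oddComponents.ncard ≤ u.ncard := by
  set O := ((⊤ : (underlyingGraph ends).Subgraph).deleteVerts u).coe.oddComponents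
  have : 3 * O.ncard ≤ 3 * u.ncard := calc
    3 * O.ncard = ∑ c ∈ O.toFinset, 3 := by simp [Set.ncard_eq_toFinset_card', mul_comm]
    _ ≤ ∑ c ∈ O.toFinset, (edgeBoundary ends (Subtype.val '' c.supp)).ncard := by
      refine sum_le_sum fun c hc => three_le_ncard_edgeBoundary hcubic hbridgeless ?_
      rw [Set.ncard_image_of_injective _ Subtype.val_injective]
      simpa [O] using hc
    _ = ∑ e, #{c ∈ O.toFinset | e ∈ edgeBoundary ends (Subtype.val '' c.supp)} := by
      simp only [card_filter, Set.ncard_eq_toFinset_card']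
      rw [sum_comm]
      refine sum_congr rfl fun c _ => ?_
      rw [sum_boole]
      congr 1
      ext e
      simp
    _ ≤ ∑ e, endCount ends u e :=
      sum_le_sum fun e _ => card_filter_mem_edgeBoundary_le_endCount _ e
    _ = 3 * u.ncard := sum_endCount hcubic u
  omega

end TutteCondition

section Matching

variable {V E : Type*} {ends : E → V × V}

lemma existsUnique_dartVert_eq {e : E} {v w : V} (hends : ends e = (v, w) ∨ ends e = (w, v))
    (hvw : v ≠ w) : ∃! i : Fin 2, dartVert ends (e, i) = v := by
  rcases hends with h | h
  · refine ⟨0, by simp [dartVert, h], fun i hi => ?_⟩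
    fin_cases i
    · rfl
    · exact absurd (by simpa [dartVert, h] using hi) hvw.symm
  · refine ⟨1, by simp [dartVert, h], fun i hi => ?_⟩
    fin_cases i
    · exact absurd (by simpa [dartVert, h] using hi) hvw.symm
    · rfl

lemma mem_ends_of_dartVert_eq {d : E × Fin 2} {v : V} (h : dartVert ends d = v) :
    v ∈ s((ends d.1).1, (ends d.1).2) := by
  unfold dartVert at h
  split_ifs at h <;> simp [← h]

lemma exists_mPerfectMatching_of_isPerfectMatching {M : (underlyingGraph ends).Subgraph}
    (hM : M.IsPerfectMatching) : ∃ M' : Set E, MPerfectMatching ends M' := by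
  have hpick : ∀ s ∈ M.edgeSet, ∃ e, s((ends e).1, (ends e).2) = s := fun s hs =>
    (edgeSet_fromEdgeSet _ ▸ M.edgeSet_subset hs).1
  choose pick hpick using hpick
  refine ⟨{e | ∃ s hs, pick s hs = e}, fun v => ?_⟩
  obtain ⟨w, hvw, hw⟩ := Subgraph.isPerfectMatching_iff.mp hM v
  have hs₀ : s(v, w) ∈ M.edgeSet := hvw
  have hends : ends (pick _ hs₀) = (v, w) ∨ ends (pick _ hs₀) = (w, v) := by
    rcases Sym2.eq_iff.mp (hpick _ hs₀) with ⟨h1, h2⟩ | ⟨h1, h2⟩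
    · exact .inl (Prod.ext h1 h2)
    · exact .inr (Prod.ext h1 h2)
  obtain ⟨i, hi, hi_unique⟩ := existsUnique_dartVert_eq hends (M.adj_sub hvw).ne
  refine Set.ncard_eq_one.mpr ⟨(pick _ hs₀, i), Set.eq_singleton_iff_unique_mem.mpr
    ⟨⟨⟨_, hs₀, rfl⟩, hi⟩, ?_⟩⟩
  rintro ⟨e, j⟩ ⟨⟨s, hs, rfl⟩, hj⟩
  have hvs : v ∈ s := hpick s hs ▸ mem_ends_of_dartVert_eq hj
  obtain ⟨w', rfl⟩ := Sym2.mem_iff_exists.mp hvs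
  obtain rfl := hw w' hs
  rw [hi_unique j hj]

end Matching

/-- **Petersen's theorem.** Every bridgeless cubic multigraph has a perfect
matching. -/
theorem bridgeless_cubic_perfect_matching {V E : Type*} [Fintype V] [Fintype E]
    (ends : E → V × V) (hcubic : MCubic ends) (hbridgeless : MBridgeless ends) :
    ∃ M : Set E, MPerfectMatching ends M := by
  obtain ⟨M, hM⟩ := (underlyingGraph ends).tutte.mpr fun u =>
    not_lt.mpr (ncard_oddComponents_deleteVerts_le hcubic hbridgeless u)
  exact exists_mPerfectMatching_of_isPerfectMatching hM
end

section
/- Every cubic graph admits a 2-colouring of its vertex set (not necessarily with equal colour classes) such that every monochromatic connected component has at most 2 vertices. -/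
open SimpleGraph Finset

/-!
Colour the vertices so as to minimise the number of monochromatic edges. If some vertex `v`
had two neighbours of its own colour, recolouring `v` would leave it at most one such
neighbour (it has degree 3) and change no edge away from `v`, so the number of monochromatic
edges would drop. Hence in a minimal colouring every vertex has at most one neighbour of its
own colour, and a graph of maximum degree at most one has components of at most two vertices.
-/

open Function

section

variable {V : Type*}

namespace SimpleGraph

theorem Reachable.eq_or_adj_of_subsingleton_neighborSet {H : SimpleGraph V}
    (hH : ∀ x, (H.neighborSet x).Subsingleton) {v w : V} (h : H.Reachable v w) :
    w = v ∨ H.Adj v w := by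
  obtain ⟨p⟩ := h
  induction p with
  | nil => exact Or.inl rfl
  | cons hvu _ ih =>
    rcases ih with rfl | huw
    · exact Or.inr hvu
    · exact Or.inl (hH _ huw hvu.symm)

theorem ncard_reachable_le_two_of_subsingleton_neighborSet {H : SimpleGraph V}
    (hH : ∀ x, (H.neighborSet x).Subsingleton) (v : V) :
    {w | H.Reachable v w}.ncard ≤ 2 := by
  have hsub : {w | H.Reachable v w} ⊆ insert v (H.neighborSet v) :=
    fun _ hw => hw.eq_or_adj_of_subsingleton_neighborSet hH
  calc {w | H.Reachable v w}.ncard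
      ≤ (insert v (H.neighborSet v)).ncard := Set.ncard_le_ncard hsub ((hH v).finite.insert v)
    _ ≤ (H.neighborSet v).ncard + 1 := Set.ncard_insert_le _ _
    _ ≤ 2 := by
      have : Finite (H.neighborSet v) := (hH v).finite
      have := Set.ncard_le_one_iff_subsingleton.2 (hH v)
      omega

theorem ncard_edgeSet_eq_ncard_neighborSet_add [Finite V] (H : SimpleGraph V) (v : V) :
    H.edgeSet.ncard = (H.neighborSet v).ncard + (H.edgeSet \ H.incidenceSet v).ncard := by
  classical
  have hcard : (H.incidenceSet v).ncard = (H.neighborSet v).ncard :=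
    Nat.card_congr (H.incidenceSetEquivNeighborSet v)
  rw [← hcard, add_comm, Set.ncard_sdiff_add_ncard_of_subset (H.incidenceSet_subset v)]

end SimpleGraph

open SimpleGraph

section Recolouring

variable [DecidableEq V] (G : SimpleGraph V) (c : V → Bool) (v : V)

theorem edgeSet_sdiff_incidenceSet_monoSubgraph_update (b : Bool) :
    (monoSubgraph G (update c v b)).edgeSet \ (monoSubgraph G (update c v b)).incidenceSet v =
      (monoSubgraph G c).edgeSet \ (monoSubgraph G c).incidenceSet v := by
  ext e
  induction e using Sym2.ind with
  | _ x y =>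
    by_cases hx : x = v
    · simp [incidenceSet, hx]
    by_cases hy : y = v
    · simp [incidenceSet, hy]
    simp [incidenceSet, monoSubgraph, update_of_ne hx, update_of_ne hy]

theorem neighborSet_monoSubgraph_update_not :
    (monoSubgraph G (update c v (!c v))).neighborSet v =
      G.neighborSet v \ (monoSubgraph G c).neighborSet v := by
  ext u
  by_cases hu : u = v
  · simp [hu]
  · simp only [mem_neighborSet, monoSubgraph, update_self, update_of_ne hu, Set.mem_sdiff]
    cases c v <;> cases c u <;> simp

theorem ncard_edgeSet_monoSubgraph_update_not_lt [Finite V]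
    (h : (G.neighborSet v).ncard < 2 * ((monoSubgraph G c).neighborSet v).ncard) :
    (monoSubgraph G (update c v (!c v))).edgeSet.ncard < (monoSubgraph G c).edgeSet.ncard := by
  have hsub : (monoSubgraph G c).neighborSet v ⊆ G.neighborSet v := fun _ hu => hu.1
  have hle := Set.ncard_le_ncard hsub
  rw [ncard_edgeSet_eq_ncard_neighborSet_add (monoSubgraph G c) v,
    ncard_edgeSet_eq_ncard_neighborSet_add (monoSubgraph G (update c v (!c v))) v,
    edgeSet_sdiff_incidenceSet_monoSubgraph_update, neighborSet_monoSubgraph_update_not,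
    Set.ncard_sdiff hsub]
  omega

end Recolouring

theorem subsingleton_neighborSet_monoSubgraph_of_isCubic [Finite V] {G : SimpleGraph V}
    (hcubic : IsCubic G) {c : V → Bool}
    (hmin : ∀ c', (monoSubgraph G c).edgeSet.ncard ≤ (monoSubgraph G c').edgeSet.ncard)
    (v : V) : ((monoSubgraph G c).neighborSet v).Subsingleton := by
  classical
  by_contra hv
  have htwo := Set.one_lt_ncard_iff_nontrivial.2 (Set.not_subsingleton_iff.1 hv)
  refine (hmin _).not_gt (ncard_edgeSet_monoSubgraph_update_not_lt G c v ?_)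
  rw [hcubic v]
  omega

end

/-- Every cubic graph admits a 2-colouring (not necessarily balanced) in which
every monochromatic component has at most 2 vertices. -/
theorem cubic_colouring_components_le_two {V : Type*} [Fintype V] (G : SimpleGraph V)
    (hcubic : IsCubic G) :
    ∃ c : V → Bool, ∀ v : V, {w | (monoSubgraph G c).Reachable v w}.ncard ≤ 2 := by
  obtain ⟨c, hmin⟩ := Finite.exists_min fun c : V → Bool => (monoSubgraph G c).edgeSet.ncard
  exact ⟨c, ncard_reachable_le_two_of_subsingleton_neighborSet
    (subsingleton_neighborSet_monoSubgraph_of_isCubic hcubic hmin)⟩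
end

section
/- A connected claw-free simple cubic graph in which every vertex lies in a diamond (i.e., a ring of diamonds) with k diamonds has exactly 4k vertices, and the diamonds are pairwise vertex-disjoint. -/
/-!
In a cubic graph, a degree-3 vertex `c` of an induced diamond `D` has all its neighbours in `D`,
so `D` is the closed neighbourhood of `c`. Two diamonds that meet share a degree-3 vertex: if `v`
is a degree-2 vertex of one of them, its two adjacent neighbours there cannot both avoid the
degree-3 vertices of the other diamond `D'`, because the degree-2 vertices of `D'` are
non-adjacent and a degree-2 vertex of `D'` has only one neighbour outside `D'`. Hence diamonds
that meet coincide, so the diamonds partition the vertex set into blocks of four.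
-/

open SimpleGraph Finset

/-- The family of vertex sets of induced diamonds of `G`. -/
def diamondSets {V : Type*} (G : SimpleGraph V) : Set (Set V) :=
  {S | ∃ f : Fin 4 → V, IsInducedDiamond G f ∧ Set.range f = S}

theorem Setoid.IsPartition.card_eq_mul_ncard {α : Type*} [Finite α] {P : Set (Set α)}
    (hP : Setoid.IsPartition P) {n : ℕ} (hn : ∀ t ∈ P, t.ncard = n) :
    Nat.card α = n * P.ncard := by
  have : Fintype P := Fintype.ofFinite P
  rw [← Set.ncard_univ, hP.ncard_eq_finsum Set.univ, finsum_eq_sum_of_fintype]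
  simp only [Set.univ_inter]
  rw [Finset.sum_congr rfl fun t _ => hn t.1 t.2, Finset.sum_const, Finset.card_univ, smul_eq_mul,
    ← Nat.card_eq_fintype_card, Nat.card_coe_set_eq, mul_comm]

lemma diamondGraph_adj_iff (i j : Fin 4) :
    diamondGraph.Adj i j ↔ i ≠ j ∧ ¬(i < 2 ∧ j < 2) := by
  fin_cases i <;> fin_cases j <;> simp [diamondGraph]

section Diamonds

variable {V : Type*} {G : SimpleGraph V} {f g : Fin 4 → V}

namespace IsInducedDiamond

lemma adj_iff (hf : IsInducedDiamond G f) {i j : Fin 4} :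
    G.Adj (f i) (f j) ↔ i ≠ j ∧ ¬(i < 2 ∧ j < 2) :=
  (hf.2 i j).trans (diamondGraph_adj_iff i j)

lemma ncard_range (hf : IsInducedDiamond G f) : (Set.range f).ncard = 4 := by
  rw [← Set.image_univ, Set.ncard_image_of_injective _ hf.1, Set.ncard_univ, Nat.card_fin]

lemma neighborSet_eq_of_two_le (hG : IsCubic G) (hf : IsInducedDiamond G f) {i : Fin 4}
    (hi : 2 ≤ i) : G.neighborSet (f i) = f '' {i}ᶜ := by
  have hsub : f '' {i}ᶜ ⊆ G.neighborSet (f i) := by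
    rintro _ ⟨j, hj, rfl⟩
    exact hf.adj_iff.2 ⟨Ne.symm hj, fun h => absurd h.1 (not_lt.2 hi)⟩
  refine (Set.eq_of_subset_of_ncard_le hsub ?_ ?_).symm
  · rw [hG, Set.ncard_image_of_injective _ hf.1, Set.ncard_compl, Set.ncard_singleton]
    simp
  · exact Set.finite_of_ncard_ne_zero (by rw [hG]; norm_num)

lemma insert_neighborSet_eq_range (hG : IsCubic G) (hf : IsInducedDiamond G f) {i : Fin 4}
    (hi : 2 ≤ i) : insert (f i) (G.neighborSet (f i)) = Set.range f := by
  rw [hf.neighborSet_eq_of_two_le hG hi, Set.insert_eq, ← Set.image_singleton,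
    ← Set.image_union, Set.union_compl_self, Set.image_univ]

lemma exists_two_le_of_adj (hG : IsCubic G) (hf : IsInducedDiamond G f) {v p q : V}
    (hv : v ∈ Set.range f) (hp : G.Adj v p) (hq : G.Adj v q) (hpq : G.Adj p q) :
    ∃ k, 2 ≤ k ∧ (f k = p ∨ f k = q) := by
  by_contra! h
  obtain ⟨i, rfl⟩ := hv
  rcases le_or_gt 2 i with hi | hi
  · have hN := hf.neighborSet_eq_of_two_le hG hi
    obtain ⟨a, -, rfl⟩ : p ∈ f '' {i}ᶜ := hN ▸ hp
    obtain ⟨b, -, rfl⟩ : q ∈ f '' {i}ᶜ := hN ▸ hq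
    have ha : a < 2 := not_le.1 fun ha => (h a ha).1 rfl
    have hb : b < 2 := not_le.1 fun hb => (h b hb).2 rfl
    exact (hf.adj_iff.1 hpq).2 ⟨ha, hb⟩
  · have hsub : {f 2, f 3, p, q} ⊆ G.neighborSet (f i) := by
      have h2 : G.Adj (f i) (f 2) := hf.adj_iff.2 ⟨by omega, by omega⟩
      have h3 : G.Adj (f i) (f 3) := hf.adj_iff.2 ⟨by omega, by omega⟩
      rintro _ (rfl | rfl | rfl | rfl) <;> assumption
    have h23 : f 2 ≠ f 3 := hf.1.ne (by decide)
    obtain ⟨h2p, h2q⟩ := h 2 le_rfl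
    obtain ⟨h3p, h3q⟩ := h 3 (by decide)
    have := Set.ncard_le_ncard hsub (Set.finite_of_ncard_ne_zero (by rw [hG]; norm_num))
    rw [hG, Set.ncard_insert_of_notMem, Set.ncard_insert_of_notMem, Set.ncard_pair hpq.ne] at this
    · omega
    · simp [h3p, h3q]
    · simp [h23, h2p, h2q]

lemma exists_two_le_eq_of_lt_two (hG : IsCubic G) (hf : IsInducedDiamond G f)
    (hg : IsInducedDiamond G g) {j : Fin 4} (hj : j < 2) (hv : g j ∈ Set.range f) :
    ∃ i j', 2 ≤ i ∧ 2 ≤ j' ∧ f i = g j' := by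
  have hadj (k l : Fin 4) (hkl : k ≠ l) (hl : 2 ≤ l) : G.Adj (g k) (g l) :=
    hg.adj_iff.2 ⟨hkl, fun h => absurd h.2 (not_lt.2 hl)⟩
  obtain ⟨i, hi, h | h⟩ := hf.exists_two_le_of_adj hG hv (hadj j 2 (by omega) le_rfl)
    (hadj j 3 (by omega) (by decide)) (hadj 2 3 (by decide) (by decide))
  exacts [⟨i, 2, hi, le_rfl, h⟩, ⟨i, 3, hi, by decide, h⟩]

lemma exists_two_le_eq_of_not_disjoint (hG : IsCubic G) (hf : IsInducedDiamond G f)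
    (hg : IsInducedDiamond G g) (h : ¬Disjoint (Set.range f) (Set.range g)) :
    ∃ i j, 2 ≤ i ∧ 2 ≤ j ∧ f i = g j := by
  obtain ⟨_, ⟨i, rfl⟩, j, hij⟩ := Set.not_disjoint_iff.1 h
  rcases lt_or_ge j 2 with hj | hj
  · exact exists_two_le_eq_of_lt_two hG hf hg hj ⟨i, hij.symm⟩
  rcases lt_or_ge i 2 with hi | hi
  · obtain ⟨j', i', hj', hi', h⟩ := exists_two_le_eq_of_lt_two hG hg hf hi ⟨j, hij⟩
    exact ⟨i', j', hi', hj', h.symm⟩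
  · exact ⟨i, j, hi, hj, hij.symm⟩

lemma range_eq_of_not_disjoint (hG : IsCubic G) (hf : IsInducedDiamond G f)
    (hg : IsInducedDiamond G g) (h : ¬Disjoint (Set.range f) (Set.range g)) :
    Set.range f = Set.range g := by
  obtain ⟨i, j, hi, hj, hij⟩ := exists_two_le_eq_of_not_disjoint hG hf hg h
  rw [← hf.insert_neighborSet_eq_range hG hi, ← hg.insert_neighborSet_eq_range hG hj, hij]

end IsInducedDiamond

lemma ncard_of_mem_diamondSets {S : Set V} (hS : S ∈ diamondSets G) : S.ncard = 4 := by
  obtain ⟨f, hf, rfl⟩ := hS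
  exact hf.ncard_range

lemma pairwiseDisjoint_diamondSets (hG : IsCubic G) : (diamondSets G).PairwiseDisjoint id := by
  rintro _ ⟨f, hf, rfl⟩ _ ⟨g, hg, rfl⟩ hne
  by_contra h
  exact hne (hf.range_eq_of_not_disjoint hG hg h)

end Diamonds

theorem ringOfDiamonds_structure_general {V : Type*} [Fintype V] (G : SimpleGraph V)
    (hcubic : IsCubic G)
    (hcover : ∀ v : V, ∃ S ∈ diamondSets G, v ∈ S)
    (k : ℕ) (hk : (diamondSets G).ncard = k) :
    (∀ S ∈ diamondSets G, ∀ T ∈ diamondSets G, S = T ∨ Disjoint S T) ∧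
      Fintype.card V = 4 * k := by
  have hdisj := pairwiseDisjoint_diamondSets hcubic
  have hpart : Setoid.IsPartition (diamondSets G) :=
    hdisj.isPartition_of_exists_of_ne_empty hcover fun h => by
      simpa using ncard_of_mem_diamondSets h
  refine ⟨fun S hS T hT => or_iff_not_imp_left.2 (hdisj hS hT), ?_⟩
  rw [Fintype.card_eq_nat_card, hpart.card_eq_mul_ncard fun _ => ncard_of_mem_diamondSets, hk]

/-- A ring of diamonds (a connected claw-free simple cubic graph in which every
vertex lies in a diamond) with `k` diamonds has exactly `4k` vertices, and its
diamonds are pairwise vertex-disjoint. -/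
theorem ringOfDiamonds_structure {V : Type*} [Fintype V] (G : SimpleGraph V)
    (hconn : G.Connected) (hclawfree : ClawFree G) (hcubic : IsCubic G)
    (hcover : ∀ v : V, ∃ S ∈ diamondSets G, v ∈ S)
    (k : ℕ) (hk : (diamondSets G).ncard = k) :
    (∀ S ∈ diamondSets G, ∀ T ∈ diamondSets G, S = T ∨ Disjoint S T) ∧
      Fintype.card V = 4 * k :=
  ringOfDiamonds_structure_general G hcubic hcover k hk
end
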